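/- Under Assumption A2, for every α ∈ (0,1) and every y0 ∈ Y: the optimal value μ*_α(y0) of the max–min problem, the optimal value g*_α(y0) of the infinite-dimensional LP problem, and (1−α)V_α(y0) all coincide: μ*_α(y0) = g*_α(y0) = (1−α)V_α(y0). Moreover, the supremum defining μ*_α(y0) is attained at ψ = V_α. -/

import Mathlib

/-!
The discounted value function `V = V_α` is bounded and satisfies the Bellman relation
`V(y) = inf_{u ∈ A(y)} (g(y,u) + α V(f(y,u)))`, which says exactly that the inner infimum of the
max–min problem at `ψ = V` equals `(1-α) V(y0)`. `V` is lower semicontinuous: its epigraph is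
sequentially closed, because near-optimal processes from converging initial states have, by
compactness of `Y × U0` and closedness of `G`, an admissible pointwise limit, along which the
discounted cost converges.

Weak duality: for `ψ ∈ LS` and `γ ∈ W_α(y0)`, integrating the inner infimum against `γ` bounds it
by `∫ g dγ`, provided the constraint integrand of `ψ` has integral zero. It does for continuous
test functions, and `ψ` is the pointwise limit on `Y` of its Lipschitz envelopes
`inf_{w ∈ Y} ψ w + n dist(·, w)`, so dominated convergence (on `G`, where `γ` lives) extends it.

The discounted occupational measures of near-optimal processes lie in `W_α(y0)` and cost `(1-α)`
times the discounted cost, so `μ*_α(y0) ≤ g*_α(y0) ≤ (1-α) V(y0) = inner infimum at V ≤ μ*_α(y0)`.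
-/

open MeasureTheory Filter Topology Set ENNReal

noncomputable section

namespace LPOC

/-- The state space `ℝ^m`. -/
abbrev E (m : ℕ) := EuclideanSpace ℝ (Fin m)

variable {m : ℕ} {U0 : Type*} [MetricSpace U0]

/-- Upper semicontinuity of a compact-valued set-valued map at points of `Y`. -/
def UscOn (Y : Set (E m)) (A : E m → Set U0) : Prop :=
  ∀ y ∈ Y, ∀ V : Set U0, IsOpen V → A y ⊆ V →
    ∃ O : Set (E m), IsOpen O ∧ y ∈ O ∧ ∀ y' ∈ O ∩ Y, A y' ⊆ V

/-- `A(y) := {u ∈ U(y) : f(y,u) ∈ Y}`. -/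
def Amap (Y : Set (E m)) (U : E m → Set U0) (f : E m × U0 → E m) (y : E m) : Set U0 :=
  {u ∈ U y | f (y, u) ∈ Y}

/-- `G := {(y,u) : y ∈ Y, u ∈ U(y), f(y,u) ∈ Y}`, the graph of `A`. -/
def graphG (Y : Set (E m)) (U : E m → Set U0) (f : E m × U0 → E m) : Set (E m × U0) :=
  {p | p.1 ∈ Y ∧ p.2 ∈ U p.1 ∧ f p ∈ Y}

/-- An admissible process `(y(·),u(·))` from `y0` on the infinite horizon. -/
def AdmProc (Y : Set (E m)) (U : E m → Set U0) (f : E m × U0 → E m)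
    (y0 : E m) (y : ℕ → E m) (u : ℕ → U0) : Prop :=
  y 0 = y0 ∧ ∀ t : ℕ, y (t + 1) = f (y t, u t) ∧ y t ∈ Y ∧ u t ∈ U (y t)

/-- An admissible process from `y0` on the finite horizon `{0, ..., S-1}`. -/
def AdmProcH (Y : Set (E m)) (U : E m → Set U0) (f : E m × U0 → E m)
    (S : ℕ) (y0 : E m) (y : ℕ → E m) (u : ℕ → U0) : Prop :=
  y 0 = y0 ∧ (∀ t < S, y (t + 1) = f (y t, u t) ∧ y t ∈ Y ∧ u t ∈ U (y t)) ∧ y S ∈ Y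

/-- The discounted cost `Σ_{t=0}^∞ α^t g(y(t),u(t))`. -/
def discountedCost (g : E m × U0 → ℝ) (α : ℝ) (y : ℕ → E m) (u : ℕ → U0) : ℝ :=
  ∑' t : ℕ, α ^ t * g (y t, u t)

/-- The discounted value function `V_α` (real-valued version). -/
def Valpha (Y : Set (E m)) (U : E m → Set U0) (f : E m × U0 → E m) (g : E m × U0 → ℝ)
    (α : ℝ) (y0 : E m) : ℝ :=
  sInf {r : ℝ | ∃ y u, AdmProc Y U f y0 y u ∧ r = discountedCost g α y u}

/-- The discounted value function `V_α` with values in `ℝ ∪ {±∞}` (equal to `+∞` when no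
admissible process exists). -/
def ValphaE (Y : Set (E m)) (U : E m → Set U0) (f : E m × U0 → E m) (g : E m × U0 → ℝ)
    (α : ℝ) (y0 : E m) : EReal :=
  sInf {r : EReal | ∃ y u, AdmProc Y U f y0 y u ∧ r = ((discountedCost g α y u : ℝ) : EReal)}

/-- The finite-horizon value function `V(S, y0)`. -/
def Vfin (Y : Set (E m)) (U : E m → Set U0) (f : E m × U0 → E m) (g : E m × U0 → ℝ)
    (S : ℕ) (y0 : E m) : ℝ :=
  sInf {r : ℝ | ∃ y u, AdmProcH Y U f S y0 y u ∧ r = ∑ t ∈ Finset.range S, g (y t, u t)}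

variable [MeasurableSpace U0] [BorelSpace U0]

/-- The discounted occupational measure `γ^α` generated by a process, i.e. the measure with
`γ^α(Q) = (1-α) Σ_{t=0}^∞ α^t 1_Q(y(t),u(t))`. -/
def discOcc (α : ℝ) (y : ℕ → E m) (u : ℕ → U0) : Measure (E m × U0) :=
  Measure.sum fun t : ℕ => (ENNReal.ofReal ((1 - α) * α ^ t)) • Measure.dirac (y t, u t)

/-- The occupational measure over `{0,...,S-1}` generated by a process, i.e. the measure with
`γ_S(Q) = (1/S) Σ_{t=0}^{S-1} 1_Q(y(t),u(t))`. -/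
def occS (S : ℕ) (y : ℕ → E m) (u : ℕ → U0) : Measure (E m × U0) :=
  ((S : ℝ≥0∞))⁻¹ • ∑ t ∈ Finset.range S, Measure.dirac (y t, u t)

/-- `Γ_α(y0)`: the set of discounted occupational measures of admissible processes from `y0`. -/
def GammaA (Y : Set (E m)) (U : E m → Set U0) (f : E m × U0 → E m) (α : ℝ) (y0 : E m) :
    Set (ProbabilityMeasure (E m × U0)) :=
  {γ | ∃ y u, AdmProc Y U f y0 y u ∧ (γ : Measure (E m × U0)) = discOcc α y u}

/-- `Γ_α := ∪_{y0 ∈ Y} Γ_α(y0)`. -/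
def GammaAall (Y : Set (E m)) (U : E m → Set U0) (f : E m × U0 → E m) (α : ℝ) :
    Set (ProbabilityMeasure (E m × U0)) :=
  ⋃ y0 ∈ Y, GammaA Y U f α y0

/-- `Γ(S)`: the set of occupational measures over `{0,...,S-1}` of admissible processes on
horizon `S`, over all initial conditions in `Y`. -/
def GammaSset (Y : Set (E m)) (U : E m → Set U0) (f : E m × U0 → E m) (S : ℕ) :
    Set (ProbabilityMeasure (E m × U0)) :=
  {γ | ∃ y0 ∈ Y, ∃ y u, AdmProcH Y U f S y0 y u ∧ (γ : Measure (E m × U0)) = occS S y u}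

/-- `W_α(y0)`: probability measures `γ` concentrated on `G` such that
`∫_G [α(φ(f(y,u))-φ(y)) + (1-α)(φ(y0)-φ(y))] dγ = 0` for all continuous `φ : Y → ℝ`. -/
def Wa (Y : Set (E m)) (U : E m → Set U0) (f : E m × U0 → E m) (α : ℝ) (y0 : E m) :
    Set (ProbabilityMeasure (E m × U0)) :=
  {γ | (γ : Measure (E m × U0)) (graphG Y U f)ᶜ = 0 ∧
    ∀ φ : E m → ℝ, ContinuousOn φ Y →
      ∫ p, (α * (φ (f p) - φ p.1) + (1 - α) * (φ y0 - φ p.1))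
        ∂(γ : Measure (E m × U0)) = 0}

/-- `W`: probability measures `γ` concentrated on `G` such that
`∫_G (φ(f(y,u))-φ(y)) dγ = 0` for all continuous `φ : Y → ℝ`. -/
def Wset (Y : Set (E m)) (U : E m → Set U0) (f : E m × U0 → E m) :
    Set (ProbabilityMeasure (E m × U0)) :=
  {γ | (γ : Measure (E m × U0)) (graphG Y U f)ᶜ = 0 ∧
    ∀ φ : E m → ℝ, ContinuousOn φ Y →
      ∫ p, (φ (f p) - φ p.1) ∂(γ : Measure (E m × U0)) = 0}

/-- `g*_α(y0)`: the optimal value of the IDLP problem over `W_α(y0)`. -/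
def gStarA (Y : Set (E m)) (U : E m → Set U0) (f : E m × U0 → E m) (g : E m × U0 → ℝ)
    (α : ℝ) (y0 : E m) : ℝ :=
  sInf {r : ℝ | ∃ γ ∈ Wa Y U f α y0, r = ∫ p, g p ∂(γ : Measure (E m × U0))}

/-- `g*`: the optimal value of the IDLP problem over `W`. -/
def gStar (Y : Set (E m)) (U : E m → Set U0) (f : E m × U0 → E m) (g : E m × U0 → ℝ) : ℝ :=
  sInf {r : ℝ | ∃ γ ∈ Wset Y U f, r = ∫ p, g p ∂(γ : Measure (E m × U0))}

/-- Membership in the class `LS` of bounded lower semicontinuous functions `Y → ℝ`. -/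
def BddLscOn (Y : Set (E m)) (ψ : E m → ℝ) : Prop :=
  LowerSemicontinuousOn ψ Y ∧ ∃ C : ℝ, ∀ y ∈ Y, |ψ y| ≤ C

/-- The inner infimum in the max-min problem (discounted case):
`inf_{(y,u) ∈ G} { g(y,u) + α(ψ(f(y,u))-ψ(y)) + (1-α)(ψ(y0)-ψ(y)) }`. -/
def muA (Y : Set (E m)) (U : E m → Set U0) (f : E m × U0 → E m) (g : E m × U0 → ℝ)
    (α : ℝ) (y0 : E m) (ψ : E m → ℝ) : ℝ :=
  sInf {s : ℝ | ∃ p ∈ graphG Y U f,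
    s = g p + α * (ψ (f p) - ψ p.1) + (1 - α) * (ψ y0 - ψ p.1)}

/-- `μ*_α(y0) := sup_{ψ ∈ LS} inf_{(y,u) ∈ G} {...}`. -/
def muStarA (Y : Set (E m)) (U : E m → Set U0) (f : E m × U0 → E m) (g : E m × U0 → ℝ)
    (α : ℝ) (y0 : E m) : ℝ :=
  sSup {r : ℝ | ∃ ψ : E m → ℝ, BddLscOn Y ψ ∧ r = muA Y U f g α y0 ψ}

/-- The inner infimum in the max-min problem (average case):
`inf_{(y,u) ∈ G} { g(y,u) + ψ(f(y,u)) - ψ(y) }`. -/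
def muBar (Y : Set (E m)) (U : E m → Set U0) (f : E m × U0 → E m) (g : E m × U0 → ℝ)
    (ψ : E m → ℝ) : ℝ :=
  sInf {s : ℝ | ∃ p ∈ graphG Y U f, s = g p + ψ (f p) - ψ p.1}

/-- `μ* := sup_{ψ ∈ LS} inf_{(y,u) ∈ G} { g(y,u) + ψ(f(y,u)) - ψ(y) }`. -/
def muStar (Y : Set (E m)) (U : E m → Set U0) (f : E m × U0 → E m) (g : E m × U0 → ℝ) : ℝ :=
  sSup {r : ℝ | ∃ ψ : E m → ℝ, BddLscOn Y ψ ∧ r = muBar Y U f g ψ}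

/-- The convex hull of a set of probability measures: all finite convex combinations. -/
def convCombos {X : Type*} [MeasurableSpace X] (Γ : Set (ProbabilityMeasure X)) :
    Set (ProbabilityMeasure X) :=
  {γ | ∃ (n : ℕ) (w : Fin n → ℝ) (μs : Fin n → ProbabilityMeasure X),
    (∀ i, 0 ≤ w i) ∧ (∑ i, w i) = 1 ∧ (∀ i, μs i ∈ Γ) ∧
    (γ : Measure X) = ∑ i, ENNReal.ofReal (w i) • (μs i : Measure X)}


section LipschitzEnvelope

variable {X : Type*} [PseudoMetricSpace X]

def lipschitzEnvelope (Y : Set X) (ψ : X → ℝ) (n : ℕ) (z : X) : ℝ :=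
  ⨅ w : Y, ψ w + n * dist z w

variable {Y : Set X} {ψ : X → ℝ} {c : ℝ}

lemma bddBelow_range_add_mul_dist (hc : ∀ w ∈ Y, c ≤ ψ w) (n : ℕ) (z : X) :
    BddBelow (range fun w : Y => ψ w + n * dist z w) := by
  refine ⟨c, ?_⟩
  rintro _ ⟨w, rfl⟩
  exact le_add_of_le_of_nonneg (hc w w.2) (by positivity)

lemma lipschitzEnvelope_le (hc : ∀ w ∈ Y, c ≤ ψ w) (n : ℕ) (z : X) {w : X} (hw : w ∈ Y) :
    lipschitzEnvelope Y ψ n z ≤ ψ w + n * dist z w :=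
  ciInf_le (bddBelow_range_add_mul_dist hc n z) ⟨w, hw⟩

lemma lipschitzEnvelope_le_self (hc : ∀ w ∈ Y, c ≤ ψ w) (n : ℕ) {z : X} (hz : z ∈ Y) :
    lipschitzEnvelope Y ψ n z ≤ ψ z := by
  simpa using lipschitzEnvelope_le hc n z hz

lemma le_lipschitzEnvelope_of_forall_le {b : ℝ} (hY : Y.Nonempty) {n : ℕ} {z : X}
    (h : ∀ w ∈ Y, b ≤ ψ w + n * dist z w) : b ≤ lipschitzEnvelope Y ψ n z :=
  have := hY.to_subtype
  le_ciInf fun w => h w w.2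

lemma le_lipschitzEnvelope (hY : Y.Nonempty) (hc : ∀ w ∈ Y, c ≤ ψ w) (n : ℕ) (z : X) :
    c ≤ lipschitzEnvelope Y ψ n z :=
  le_lipschitzEnvelope_of_forall_le hY fun w hw =>
    le_add_of_le_of_nonneg (hc w hw) (by positivity)

lemma continuous_lipschitzEnvelope (hY : Y.Nonempty) (hc : ∀ w ∈ Y, c ≤ ψ w) (n : ℕ) :
    Continuous (lipschitzEnvelope Y ψ n) := by
  refine (LipschitzWith.of_le_add_mul' n fun x y => ?_).continuous
  rw [← sub_le_iff_le_add]
  refine le_lipschitzEnvelope_of_forall_le hY fun w hw => ?_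
  rw [sub_le_iff_le_add]
  calc lipschitzEnvelope Y ψ n x ≤ ψ w + n * dist x w := lipschitzEnvelope_le hc n x hw
    _ ≤ ψ w + n * dist y w + n * dist x y := by
      rw [add_assoc, ← mul_add, add_comm (dist y w)]
      gcongr
      apply dist_triangle

/-- Near `z`, lower semicontinuity gives `ψ > b`; away from `z` the penalty `n * dist z w`
eventually exceeds `b - c`. -/
lemma tendsto_lipschitzEnvelope (hc : ∀ w ∈ Y, c ≤ ψ w) (hψ : LowerSemicontinuousOn ψ Y)
    {z : X} (hz : z ∈ Y) :
    Tendsto (fun n => lipschitzEnvelope Y ψ n z) atTop (𝓝 (ψ z)) := by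
  refine tendsto_order.2 ⟨fun a ha => ?_, fun a ha => Eventually.of_forall fun n =>
    (lipschitzEnvelope_le_self hc n hz).trans_lt ha⟩
  obtain ⟨b, hab, hb⟩ := exists_between ha
  obtain ⟨δ, hδ, hball⟩ := Metric.mem_nhdsWithin_iff.1 (hψ z hz b hb)
  obtain ⟨N, hN⟩ := exists_nat_gt ((b - c) / δ)
  filter_upwards [eventually_ge_atTop N] with n hn
  refine hab.trans_le (le_lipschitzEnvelope_of_forall_le ⟨z, hz⟩ fun w hw => ?_)
  by_cases hwz : dist w z < δ
  · exact le_add_of_le_of_nonneg (hball ⟨hwz, hw⟩).le (by positivity)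
  · have : b - c ≤ n * dist z w := by
      rw [div_lt_iff₀ hδ] at hN
      rw [dist_comm]
      nlinarith [(Nat.cast_le (α := ℝ)).2 hn]
    linarith [hc w hw]

end LipschitzEnvelope

section DiscountedSums

variable {α : ℝ} {a : ℕ → ℝ} {C : ℝ}

lemma hasSum_geometric_mul (hα₀ : 0 ≤ α) (hα₁ : α < 1) (C : ℝ) :
    HasSum (fun t : ℕ => C * α ^ t) (C * (1 - α)⁻¹) :=
  (hasSum_geometric_of_lt_one hα₀ hα₁).mul_left C

lemma norm_pow_mul_le (hα₀ : 0 ≤ α) (ha : ∀ t, |a t| ≤ C) (t : ℕ) :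
    ‖α ^ t * a t‖ ≤ C * α ^ t := by
  rw [Real.norm_eq_abs, abs_mul, abs_pow, abs_of_nonneg hα₀, mul_comm]
  exact mul_le_mul_of_nonneg_right (ha t) (by positivity)

lemma summable_pow_mul (hα₀ : 0 ≤ α) (hα₁ : α < 1) (ha : ∀ t, |a t| ≤ C) :
    Summable fun t => α ^ t * a t :=
  (hasSum_geometric_mul hα₀ hα₁ C).summable.of_norm_bounded (norm_pow_mul_le hα₀ ha)

lemma abs_tsum_pow_mul_le (hα₀ : 0 ≤ α) (hα₁ : α < 1) (ha : ∀ t, |a t| ≤ C) :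
    |∑' t, α ^ t * a t| ≤ C * (1 - α)⁻¹ :=
  tsum_of_norm_bounded (hasSum_geometric_mul hα₀ hα₁ C) (norm_pow_mul_le hα₀ ha)

lemma tsum_pow_mul_eq_add_tsum (hα₀ : 0 ≤ α) (hα₁ : α < 1) (ha : ∀ t, |a t| ≤ C) :
    ∑' t, α ^ t * a t = a 0 + α * ∑' t, α ^ t * a (t + 1) := by
  rw [(summable_pow_mul hα₀ hα₁ ha).tsum_eq_zero_add, ← tsum_mul_left]
  simp only [pow_zero, one_mul, pow_succ, mul_assoc, mul_left_comm α]

/-- `α^t (α a_{t+1} - a_t)` telescopes to `-a₀`, which the constant part cancels. -/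
lemma tsum_pow_mul_discrepancy (hα₀ : 0 ≤ α) (hα₁ : α < 1) (ha : ∀ t, |a t| ≤ C) :
    ∑' t, α ^ t * (α * (a (t + 1) - a t) + (1 - α) * (a 0 - a t)) = 0 := by
  have hs := summable_pow_mul hα₀ hα₁ ha
  have hs₁ : Summable fun t => α ^ t * a (t + 1) := summable_pow_mul hα₀ hα₁ fun t => ha (t + 1)
  have hgeom := hasSum_geometric_mul hα₀ hα₁ ((1 - α) * a 0)
  have hterm : ∀ t, α ^ t * (α * (a (t + 1) - a t) + (1 - α) * (a 0 - a t))
      = (α * (α ^ t * a (t + 1)) - α ^ t * a t) + (1 - α) * a 0 * α ^ t := fun t => by ring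
  rw [tsum_congr hterm, ((hs₁.mul_left α).sub hs).tsum_add hgeom.summable,
    (hs₁.mul_left α).tsum_sub hs, tsum_mul_left, hgeom.tsum_eq,
    tsum_pow_mul_eq_add_tsum hα₀ hα₁ ha]
  field_simp [(sub_pos.2 hα₁).ne']
  ring

end DiscountedSums

section Admissibility

variable {m : ℕ} {U0 : Type*} {Y : Set (E m)} {U : E m → Set U0}
  {f : E m × U0 → E m} {y0 : E m} {y : ℕ → E m} {u : ℕ → U0}

lemma isClosed_graphG [MetricSpace U0] (hY : IsClosed Y) (hUusc : UscOn Y U)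
    (hU : ∀ y ∈ Y, IsClosed (U y)) (hf : Continuous f) : IsClosed (graphG Y U f) := by
  have hgraph : IsClosed {p : E m × U0 | p.1 ∈ Y ∧ p.2 ∈ U p.1} := by
    refine isOpen_compl_iff.1 (isOpen_iff_mem_nhds.2 fun p hp => ?_)
    by_cases hpY : p.1 ∈ Y
    · have hpU : p.2 ∉ U p.1 := fun h => hp ⟨hpY, h⟩
      obtain ⟨V, hV, W, hW, hVW⟩ := Filter.disjoint_iff.1
        (disjoint_nhdsSet_nhds.2 (by rwa [(hU _ hpY).closure_eq]))
      obtain ⟨V', hV'o, hUV', hV'V⟩ := mem_nhdsSet_iff_exists.1 hV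
      obtain ⟨O, hOo, hpO, hOV⟩ := hUusc _ hpY V' hV'o hUV'
      filter_upwards [prod_mem_nhds (hOo.mem_nhds hpO) hW] with q hq hqG
      exact hVW.ne_of_mem (hV'V (hOV _ ⟨hq.1, hqG.1⟩ hqG.2)) hq.2 rfl
    · filter_upwards [continuous_fst.continuousAt.preimage_mem_nhds
        (hY.isOpen_compl.mem_nhds hpY)] with q hq hqG using hq hqG.1
  convert hgraph.inter (hY.preimage hf) using 1
  ext p
  simp only [graphG, mem_inter_iff, mem_ofPred_eq, mem_preimage, and_assoc]

lemma AdmProc.mem (h : AdmProc Y U f y0 y u) (t : ℕ) : y t ∈ Y := (h.2 t).2.1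

lemma AdmProc.mem_graphG (h : AdmProc Y U f y0 y u) (t : ℕ) : (y t, u t) ∈ graphG Y U f :=
  ⟨h.mem t, (h.2 t).2.2, (h.2 t).1 ▸ h.mem (t + 1)⟩

lemma AdmProc.tail (h : AdmProc Y U f y0 y u) :
    AdmProc Y U f (y 1) (fun t => y (t + 1)) (fun t => u (t + 1)) :=
  ⟨rfl, fun t => h.2 (t + 1)⟩

lemma AdmProc.cons {u0 : U0} (hy0 : y0 ∈ Y) (hu0 : u0 ∈ Amap Y U f y0)
    (h : AdmProc Y U f (f (y0, u0)) y u) :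
    AdmProc Y U f y0 (fun t => Nat.casesOn t y0 y) (fun t => Nat.casesOn t u0 u) := by
  refine ⟨rfl, fun t => ?_⟩
  cases t with
  | zero => exact ⟨h.1, hy0, hu0.1⟩
  | succ t => exact h.2 t

lemma exists_admProc (hA2 : ∀ y ∈ Y, (Amap Y U f y).Nonempty) (hy0 : y0 ∈ Y) :
    ∃ y u, AdmProc Y U f y0 y u := by
  classical
  let σ : E m → U0 := fun y => if hy : y ∈ Y then (hA2 y hy).some else (hA2 y0 hy0).some
  have hσ : ∀ y ∈ Y, σ y ∈ Amap Y U f y := fun y hy => by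
    simp only [σ, dif_pos hy]
    exact (hA2 y hy).some_mem
  let y : ℕ → E m := fun t => Nat.rec y0 (fun _ yt => f (yt, σ yt)) t
  have hy : ∀ t, y t ∈ Y := fun t => by
    induction t with
    | zero => exact hy0
    | succ t ih => exact (hσ _ ih).2
  exact ⟨y, fun t => σ (y t), rfl, fun t => ⟨rfl, hy t, (hσ _ (hy t)).1⟩⟩

lemma admProc_of_tendsto [TopologicalSpace U0] (hG : IsClosed (graphG Y U f)) (hf : Continuous f)
    {x : ℕ → E m} {ys : ℕ → ℕ → E m} {us : ℕ → ℕ → U0}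
    (hadm : ∀ k, AdmProc Y U f (x k) (ys k) (us k))
    (hx : Tendsto x atTop (𝓝 y0))
    (hlim : ∀ t, Tendsto (fun k => (ys k t, us k t)) atTop (𝓝 (y t, u t))) :
    AdmProc Y U f y0 y u := by
  have hG_lim : ∀ t, (y t, u t) ∈ graphG Y U f := fun t =>
    hG.mem_of_tendsto (hlim t) (Eventually.of_forall fun k => (hadm k).mem_graphG t)
  have hy_lim : ∀ t, Tendsto (fun k => ys k t) atTop (𝓝 (y t)) := fun t =>
    (continuous_fst.tendsto _).comp (hlim t)
  refine ⟨tendsto_nhds_unique (by simpa only [(hadm _).1] using hy_lim 0) hx,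
    fun t => ⟨tendsto_nhds_unique (hy_lim (t + 1)) ?_, (hG_lim t).1, (hG_lim t).2.1⟩⟩
  simpa only [((hadm _).2 t).1, Function.comp_def] using (hf.tendsto _).comp (hlim t)

end Admissibility

section ValueFunction

variable {m : ℕ} {U0 : Type*} {Y : Set (E m)} {U : E m → Set U0} {f : E m × U0 → E m}
  {g : E m × U0 → ℝ} {α M : ℝ} {y0 : E m} {y : ℕ → E m} {u : ℕ → U0}

lemma abs_discountedCost_le (hα₀ : 0 ≤ α) (hα₁ : α < 1) (hM : ∀ p : E m × U0, p.1 ∈ Y → |g p| ≤ M)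
    (hy : ∀ t, y t ∈ Y) : |discountedCost g α y u| ≤ M * (1 - α)⁻¹ :=
  abs_tsum_pow_mul_le hα₀ hα₁ fun t => hM _ (hy t)

lemma discountedCost_eq_add_tail (hα₀ : 0 ≤ α) (hα₁ : α < 1)
    (hM : ∀ p : E m × U0, p.1 ∈ Y → |g p| ≤ M) (hy : ∀ t, y t ∈ Y) :
    discountedCost g α y u
      = g (y 0, u 0) + α * discountedCost g α (fun t => y (t + 1)) (fun t => u (t + 1)) :=
  tsum_pow_mul_eq_add_tsum hα₀ hα₁ fun t => hM _ (hy t)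

lemma bddBelow_discountedCosts (hα₀ : 0 ≤ α) (hα₁ : α < 1)
    (hM : ∀ p : E m × U0, p.1 ∈ Y → |g p| ≤ M) :
    BddBelow {r | ∃ y u, AdmProc Y U f y0 y u ∧ r = discountedCost g α y u} := by
  refine ⟨-(M * (1 - α)⁻¹), ?_⟩
  rintro _ ⟨y, u, h, rfl⟩
  exact neg_le_of_abs_le (abs_discountedCost_le hα₀ hα₁ hM h.mem)

lemma Valpha_le_discountedCost (hα₀ : 0 ≤ α) (hα₁ : α < 1)
    (hM : ∀ p : E m × U0, p.1 ∈ Y → |g p| ≤ M) (h : AdmProc Y U f y0 y u) :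
    Valpha Y U f g α y0 ≤ discountedCost g α y u :=
  csInf_le (bddBelow_discountedCosts hα₀ hα₁ hM) ⟨y, u, h, rfl⟩

lemma exists_discountedCost_lt (hA2 : ∀ y ∈ Y, (Amap Y U f y).Nonempty) (hy0 : y0 ∈ Y)
    {ε : ℝ} (hε : 0 < ε) :
    ∃ y u, AdmProc Y U f y0 y u ∧ discountedCost g α y u < Valpha Y U f g α y0 + ε := by
  obtain ⟨y, u, h⟩ := exists_admProc hA2 hy0
  have hne : {r | ∃ y u, AdmProc Y U f y0 y u ∧ r = discountedCost g α y u}.Nonempty :=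
    ⟨_, y, u, h, rfl⟩
  obtain ⟨_, ⟨y, u, h, rfl⟩, hlt⟩ :=
    exists_lt_of_csInf_lt hne (lt_add_of_pos_right (Valpha Y U f g α y0) hε)
  exact ⟨y, u, h, hlt⟩

lemma abs_Valpha_le (hα₀ : 0 ≤ α) (hα₁ : α < 1) (hM : ∀ p : E m × U0, p.1 ∈ Y → |g p| ≤ M)
    (hA2 : ∀ y ∈ Y, (Amap Y U f y).Nonempty) (hy0 : y0 ∈ Y) :
    |Valpha Y U f g α y0| ≤ M * (1 - α)⁻¹ := by
  obtain ⟨y, u, h⟩ := exists_admProc hA2 hy0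
  refine abs_le.2 ⟨le_csInf ⟨_, y, u, h, rfl⟩ ?_,
    (Valpha_le_discountedCost hα₀ hα₁ hM h).trans
      (le_of_abs_le (abs_discountedCost_le hα₀ hα₁ hM h.mem))⟩
  rintro _ ⟨y, u, h, rfl⟩
  exact neg_le_of_abs_le (abs_discountedCost_le hα₀ hα₁ hM h.mem)

lemma Valpha_le_add (hα₀ : 0 ≤ α) (hα₁ : α < 1) (hM : ∀ p : E m × U0, p.1 ∈ Y → |g p| ≤ M)
    (hA2 : ∀ y ∈ Y, (Amap Y U f y).Nonempty) (hy0 : y0 ∈ Y) {u0 : U0}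
    (hu0 : u0 ∈ Amap Y U f y0) :
    Valpha Y U f g α y0 ≤ g (y0, u0) + α * Valpha Y U f g α (f (y0, u0)) := by
  refine le_of_forall_pos_lt_add fun ε hε => ?_
  obtain ⟨y, u, h, hlt⟩ := exists_discountedCost_lt (g := g) (α := α) hA2 hu0.2 hε
  have hcons := h.cons hy0 hu0
  calc Valpha Y U f g α y0
      ≤ discountedCost g α (fun t => Nat.casesOn t y0 y) (fun t => Nat.casesOn t u0 u) :=
        Valpha_le_discountedCost hα₀ hα₁ hM hcons
    _ = g (y0, u0) + α * discountedCost g α y u :=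
        discountedCost_eq_add_tail hα₀ hα₁ hM hcons.mem
    _ < g (y0, u0) + α * Valpha Y U f g α (f (y0, u0)) + ε := by
        nlinarith [mul_nonneg hα₀ (sub_pos.2 hlt).le, mul_pos (sub_pos.2 hα₁) hε]

lemma exists_add_lt_Valpha_add (hα₀ : 0 ≤ α) (hα₁ : α < 1)
    (hM : ∀ p : E m × U0, p.1 ∈ Y → |g p| ≤ M) (hA2 : ∀ y ∈ Y, (Amap Y U f y).Nonempty)
    (hy0 : y0 ∈ Y) {ε : ℝ} (hε : 0 < ε) :
    ∃ u0 ∈ Amap Y U f y0,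
      g (y0, u0) + α * Valpha Y U f g α (f (y0, u0)) < Valpha Y U f g α y0 + ε := by
  obtain ⟨y, u, h, hlt⟩ := exists_discountedCost_lt (g := g) (α := α) hA2 hy0 hε
  obtain rfl := h.1
  have hy1 : f (y 0, u 0) = y 1 := (h.2 0).1.symm
  refine ⟨u 0, ⟨(h.2 0).2.2, hy1 ▸ h.mem 1⟩, ?_⟩
  calc g (y 0, u 0) + α * Valpha Y U f g α (f (y 0, u 0))
      ≤ g (y 0, u 0) + α * discountedCost g α (fun t => y (t + 1)) (fun t => u (t + 1)) := by
        rw [hy1]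
        gcongr
        exact Valpha_le_discountedCost hα₀ hα₁ hM h.tail
    _ = discountedCost g α y u := (discountedCost_eq_add_tail hα₀ hα₁ hM h.mem).symm
    _ < Valpha Y U f g α (y 0) + ε := hlt

lemma muA_Valpha (hα₀ : 0 ≤ α) (hα₁ : α < 1) (hM : ∀ p : E m × U0, p.1 ∈ Y → |g p| ≤ M)
    (hA2 : ∀ y ∈ Y, (Amap Y U f y).Nonempty) (hy0 : y0 ∈ Y) :
    muA Y U f g α y0 (Valpha Y U f g α) = (1 - α) * Valpha Y U f g α y0 := by
  obtain ⟨u0, hu0⟩ := hA2 y0 hy0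
  refine csInf_eq_of_forall_ge_of_forall_gt_exists_lt
    ⟨_, (y0, u0), ⟨hy0, hu0.1, hu0.2⟩, rfl⟩ ?_ fun w hw => ?_
  · rintro _ ⟨p, hp, rfl⟩
    have := Valpha_le_add (g := g) hα₀ hα₁ hM hA2 hp.1 (u0 := p.2) ⟨hp.2.1, hp.2.2⟩
    linarith
  · obtain ⟨u1, hu1, hlt⟩ := exists_add_lt_Valpha_add hα₀ hα₁ hM hA2 hy0 (sub_pos.2 hw)
    exact ⟨_, ⟨(y0, u1), ⟨hy0, hu1.1, hu1.2⟩, rfl⟩, by linarith⟩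

end ValueFunction

lemma exists_strictMono_tendsto_pi {X : Type*} [PseudoMetricSpace X] {K : Set X}
    (hK : IsCompact K) {z : ℕ → ℕ → X} (hz : ∀ k t, z k t ∈ K) :
    ∃ zb : ℕ → X, ∃ φ : ℕ → ℕ, StrictMono φ ∧
      ∀ t, Tendsto (fun k => z (φ k) t) atTop (𝓝 (zb t)) := by
  obtain ⟨zb, -, φ, hφ, hlim⟩ :=
    (isCompact_univ_pi fun _ : ℕ => hK).isSeqCompact fun k t _ => hz k t
  exact ⟨zb, φ, hφ, fun t => ((continuous_apply t).tendsto zb).comp hlim⟩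

section LowerSemicontinuity

variable {m : ℕ} {U0 : Type*} {Y : Set (E m)} {U : E m → Set U0} {f : E m × U0 → E m}
  {g : E m × U0 → ℝ} {α M : ℝ}

lemma tendsto_discountedCost [TopologicalSpace U0] (hα₀ : 0 ≤ α) (hα₁ : α < 1)
    (hM : ∀ p : E m × U0, p.1 ∈ Y → |g p| ≤ M) (hg : Continuous g)
    {ys : ℕ → ℕ → E m} {us : ℕ → ℕ → U0} {y : ℕ → E m} {u : ℕ → U0} (hys : ∀ k t, ys k t ∈ Y)
    (hlim : ∀ t, Tendsto (fun k => (ys k t, us k t)) atTop (𝓝 (y t, u t))) :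
    Tendsto (fun k => discountedCost g α (ys k) (us k)) atTop (𝓝 (discountedCost g α y u)) :=
  tendsto_tsum_of_dominated_convergence (hasSum_geometric_mul hα₀ hα₁ M).summable
    (fun t => ((hg.tendsto _).comp (hlim t)).const_mul _)
    (Eventually.of_forall fun k => norm_pow_mul_le hα₀ fun t => hM _ (hys k t))

lemma lowerSemicontinuousOn_Valpha [MetricSpace U0] [CompactSpace U0] (hYc : IsCompact Y)
    (hUusc : UscOn Y U) (hUcomp : ∀ y ∈ Y, IsCompact (U y)) (hf : Continuous f)
    (hg : Continuous g) (hα₀ : 0 ≤ α) (hα₁ : α < 1) (hM : ∀ p : E m × U0, p.1 ∈ Y → |g p| ≤ M)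
    (hA2 : ∀ y ∈ Y, (Amap Y U f y).Nonempty) :
    LowerSemicontinuousOn (Valpha Y U f g α) Y := by
  have hG := isClosed_graphG hYc.isClosed hUusc (fun y hy => (hUcomp y hy).isClosed) hf
  refine (lowerSemicontinuousOn_iff_isClosed_epigraph hYc.isClosed).2
    (IsSeqClosed.isClosed fun {q q₀} hq hlim => ?_)
  choose ys us hadm hcost using fun k : ℕ =>
    exists_discountedCost_lt (g := g) (α := α) hA2 (hq k).1 (Nat.one_div_pos_of_nat (n := k))
  obtain ⟨z, φ, hφ, hz⟩ := exists_strictMono_tendsto_pi (hYc.prod isCompact_univ)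
    (z := fun k t => (ys k t, us k t)) fun k t => mk_mem_prod ((hadm k).mem t) (mem_univ _)
  have hlimφ := hlim.comp hφ.tendsto_atTop
  have hadm₀ : AdmProc Y U f q₀.1 (fun t => (z t).1) (fun t => (z t).2) :=
    admProc_of_tendsto hG hf (fun k => hadm (φ k)) ((continuous_fst.tendsto _).comp hlimφ) hz
  have hbound : Tendsto (fun k => (q (φ k)).2 + 1 / ((φ k : ℝ) + 1)) atTop (𝓝 (q₀.2 + 0)) :=
    ((continuous_snd.tendsto _).comp hlimφ).add
      (tendsto_one_div_add_atTop_nhds_zero_nat.comp hφ.tendsto_atTop)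
  refine ⟨hadm₀.1 ▸ hadm₀.mem 0, (Valpha_le_discountedCost hα₀ hα₁ hM hadm₀).trans ?_⟩
  refine le_of_tendsto_of_tendsto
    (tendsto_discountedCost hα₀ hα₁ hM hg (fun k => (hadm (φ k)).mem) hz) (by simpa using hbound)
    (Eventually.of_forall fun k => ?_)
  have := (hq (φ k)).2
  exact (hcost (φ k)).le.trans (by rw [one_div]; gcongr)

end LowerSemicontinuity

lemma abs_discrepancy_le {α a b c C : ℝ} (hα₀ : 0 ≤ α) (hα₁ : α ≤ 1) (ha : |a| ≤ C) (hb : |b| ≤ C)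
    (hc : |c| ≤ C) : |α * (a - b) + (1 - α) * (c - b)| ≤ 2 * C := by
  obtain ⟨ha₁, ha₂⟩ := abs_le.1 ha
  obtain ⟨hc₁, hc₂⟩ := abs_le.1 hc
  obtain ⟨hb₁, hb₂⟩ := abs_le.1 hb
  have h₁ := mul_le_mul_of_nonneg_left ha₂ hα₀
  have h₂ := mul_le_mul_of_nonneg_left ha₁ hα₀
  have h₃ := mul_le_mul_of_nonneg_left hc₂ (sub_nonneg.2 hα₁)
  have h₄ := mul_le_mul_of_nonneg_left hc₁ (sub_nonneg.2 hα₁)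
  exact abs_le.2 ⟨by nlinarith, by nlinarith⟩

section OccupationalMeasure

variable {m : ℕ} {U0 : Type*} [MeasurableSpace U0] {Y : Set (E m)} {U : E m → Set U0}
  {f : E m × U0 → E m} {g : E m × U0 → ℝ} {α M : ℝ} {y0 : E m}
  {y : ℕ → E m} {u : ℕ → U0}

lemma ae_mem_graphG_of_mem_Wa {γ : ProbabilityMeasure (E m × U0)} (hγ : γ ∈ Wa Y U f α y0) :
    ∀ᵐ p ∂(γ : Measure (E m × U0)), p ∈ graphG Y U f :=
  ae_iff.2 hγ.1

lemma isProbabilityMeasure_discOcc (hα₀ : 0 ≤ α) (hα₁ : α < 1) :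
    IsProbabilityMeasure (discOcc α y u) := by
  constructor
  rw [discOcc, Measure.sum_apply _ MeasurableSet.univ]
  simp only [Measure.smul_apply, measure_univ, smul_eq_mul, mul_one]
  rw [← ENNReal.ofReal_tsum_of_nonneg (fun t => mul_nonneg (sub_nonneg.2 hα₁.le) (pow_nonneg hα₀ t))
    (hasSum_geometric_mul hα₀ hα₁ _).summable, (hasSum_geometric_mul hα₀ hα₁ _).tsum_eq,
    mul_inv_cancel₀ (sub_pos.2 hα₁).ne', ENNReal.ofReal_one]

lemma ae_discOcc [MeasurableSingletonClass U0] : ∀ᵐ p ∂discOcc α y u, ∃ t, (y t, u t) = p := by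
  rw [discOcc, Measure.ae_sum_iff]
  intro t
  exact Measure.ae_smul_measure (by rw [ae_dirac_eq]; exact ⟨t, rfl⟩) _

lemma integral_discOcc [MeasurableSingletonClass U0] (hα₀ : 0 ≤ α) (hα₁ : α < 1)
    {h : E m × U0 → ℝ} {C : ℝ}
    (hC : ∀ t, |h (y t, u t)| ≤ C) :
    ∫ p, h p ∂discOcc α y u = (1 - α) * ∑' t, α ^ t * h (y t, u t) := by
  have := isProbabilityMeasure_discOcc hα₀ hα₁ (y := y) (u := u)
  have hint : Integrable h (discOcc α y u) :=
    (integrable_const C).mono' (.sum_measure fun t => aestronglyMeasurable_dirac.smul_measure _)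
      (ae_discOcc.mono fun p ⟨t, ht⟩ => ht ▸ hC t)
  rw [discOcc] at hint ⊢
  rw [integral_sum_measure hint, ← tsum_mul_left]
  congr 1 with t
  rw [integral_smul_measure, integral_dirac,
    ENNReal.toReal_ofReal (mul_nonneg (sub_nonneg.2 hα₁.le) (pow_nonneg hα₀ t)), smul_eq_mul]
  ring

lemma GammaA_subset_Wa [MeasurableSingletonClass U0] (hYc : IsCompact Y) (hα₀ : 0 ≤ α)
    (hα₁ : α < 1) :
    GammaA Y U f α y0 ⊆ Wa Y U f α y0 := by
  rintro γ ⟨y, u, hadm, hγ⟩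
  rw [Wa, mem_ofPred_eq, hγ]
  refine ⟨ae_iff.1 (ae_discOcc.mono fun p ⟨t, ht⟩ => ht ▸ hadm.mem_graphG t), fun φ hφ => ?_⟩
  obtain ⟨C, hC⟩ := hYc.exists_bound_of_continuousOn hφ
  have hφy : ∀ t, |φ (y t)| ≤ C := fun t => hC _ (hadm.mem t)
  have hstep : ∀ t, f (y t, u t) = y (t + 1) := fun t => ((hadm.2 t).1).symm
  rw [integral_discOcc hα₀ hα₁ (C := 2 * C) fun t => by
    rw [hstep, ← hadm.1]; exact abs_discrepancy_le hα₀ hα₁.le (hφy _) (hφy _) (hφy _)]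
  simp only [hstep, ← hadm.1]
  rw [tsum_pow_mul_discrepancy hα₀ hα₁ hφy, mul_zero]

lemma exists_mem_Wa_integral_eq [MeasurableSingletonClass U0] (hYc : IsCompact Y) (hα₀ : 0 ≤ α)
    (hα₁ : α < 1)
    (hM : ∀ p : E m × U0, p.1 ∈ Y → |g p| ≤ M) (hadm : AdmProc Y U f y0 y u) :
    ∃ γ ∈ Wa Y U f α y0,
      ∫ p, g p ∂(γ : Measure (E m × U0)) = (1 - α) * discountedCost g α y u :=
  ⟨⟨discOcc α y u, isProbabilityMeasure_discOcc hα₀ hα₁⟩,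
    GammaA_subset_Wa hYc hα₀ hα₁ ⟨y, u, hadm, rfl⟩,
    integral_discOcc hα₀ hα₁ fun t => hM _ (hadm.mem t)⟩

end OccupationalMeasure

section Duality

variable {m : ℕ} {U0 : Type*} [TopologicalSpace U0] [MeasurableSpace U0]
  [OpensMeasurableSpace U0] {Y : Set (E m)} {U : E m → Set U0} {f : E m × U0 → E m}
  {g : E m × U0 → ℝ} {α M : ℝ} {y0 : E m} {γ : ProbabilityMeasure (E m × U0)} {ψ : E m → ℝ}

lemma integral_discrepancy_eq_zero (hf : Continuous f) (hy0 : y0 ∈ Y) (hα₀ : 0 ≤ α)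
    (hα₁ : α ≤ 1) (hγ : γ ∈ Wa Y U f α y0) (hψ : BddLscOn Y ψ) :
    Integrable (fun p => α * (ψ (f p) - ψ p.1) + (1 - α) * (ψ y0 - ψ p.1)) γ ∧
      ∫ p, (α * (ψ (f p) - ψ p.1) + (1 - α) * (ψ y0 - ψ p.1)) ∂(γ : Measure (E m × U0)) = 0 := by
  obtain ⟨hlsc, C, hC⟩ := hψ
  have hlow : ∀ w ∈ Y, -C ≤ ψ w := fun w hw => neg_le_of_abs_le (hC w hw)
  set Φ := lipschitzEnvelope Y ψ
  have hΦc : ∀ n, Continuous (Φ n) := continuous_lipschitzEnvelope ⟨y0, hy0⟩ hlow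
  have hΦC : ∀ n, ∀ z ∈ Y, |Φ n z| ≤ C := fun n z hz =>
    abs_le.2 ⟨le_lipschitzEnvelope ⟨y0, hy0⟩ hlow n z,
      (lipschitzEnvelope_le_self hlow n hz).trans (le_of_abs_le (hC z hz))⟩
  set F : ℕ → E m × U0 → ℝ := fun n p => α * (Φ n (f p) - Φ n p.1) + (1 - α) * (Φ n y0 - Φ n p.1)
  have hG := ae_mem_graphG_of_mem_Wa hγ
  have hF_meas : ∀ n, AEStronglyMeasurable (F n) γ := fun n => by
    have := hΦc n
    exact Continuous.aestronglyMeasurable (by fun_prop)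
  have hF_bound : ∀ n, ∀ᵐ p ∂(γ : Measure (E m × U0)), ‖F n p‖ ≤ 2 * C := fun n =>
    hG.mono fun p hp => abs_discrepancy_le hα₀ hα₁ (hΦC n _ hp.2.2) (hΦC n _ hp.1) (hΦC n _ hy0)
  have hF_lim : ∀ᵐ p ∂(γ : Measure (E m × U0)), Tendsto (fun n => F n p) atTop
      (𝓝 (α * (ψ (f p) - ψ p.1) + (1 - α) * (ψ y0 - ψ p.1))) := by
    filter_upwards [hG] with p hp
    have hlim : ∀ z ∈ Y, Tendsto (fun n => Φ n z) atTop (𝓝 (ψ z)) := fun z hz =>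
      tendsto_lipschitzEnvelope hlow hlsc hz
    exact (((hlim _ hp.2.2).sub (hlim _ hp.1)).const_mul α).add
      (((hlim _ hy0).sub (hlim _ hp.1)).const_mul (1 - α))
  refine ⟨(integrable_const (2 * C)).mono' (aestronglyMeasurable_of_tendsto_ae _ hF_meas hF_lim)
    (hG.mono fun p hp => abs_discrepancy_le hα₀ hα₁ (hC _ hp.2.2) (hC _ hp.1) (hC _ hy0)), ?_⟩
  refine tendsto_nhds_unique (tendsto_integral_of_dominated_convergence _ hF_meas
    (integrable_const (2 * C)) hF_bound hF_lim) (tendsto_const_nhds.congr fun n => ?_)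
  exact (hγ.2 (Φ n) (hΦc n).continuousOn).symm

lemma muA_le_integral (hf : Continuous f) (hg : Continuous g)
    (hM : ∀ p : E m × U0, p.1 ∈ Y → |g p| ≤ M) (hy0 : y0 ∈ Y) (hα₀ : 0 ≤ α) (hα₁ : α ≤ 1)
    (hγ : γ ∈ Wa Y U f α y0) (hψ : BddLscOn Y ψ) :
    muA Y U f g α y0 ψ ≤ ∫ p, g p ∂(γ : Measure (E m × U0)) := by
  obtain ⟨hint, hzero⟩ := integral_discrepancy_eq_zero hf hy0 hα₀ hα₁ hγ hψ
  obtain ⟨-, C, hC⟩ := hψ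
  have hG := ae_mem_graphG_of_mem_Wa hγ
  have hg_int : Integrable g γ :=
    (integrable_const M).mono' hg.aestronglyMeasurable (hG.mono fun p hp => hM p hp.1)
  have hbdd : BddBelow {s : ℝ | ∃ p ∈ graphG Y U f,
      s = g p + α * (ψ (f p) - ψ p.1) + (1 - α) * (ψ y0 - ψ p.1)} := by
    refine ⟨-M - 2 * C, ?_⟩
    rintro _ ⟨p, hp, rfl⟩
    have := abs_discrepancy_le hα₀ hα₁ (hC _ hp.2.2) (hC _ hp.1) (hC _ hy0)
    linarith [neg_le_of_abs_le (hM p hp.1), neg_le_of_abs_le this]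
  calc muA Y U f g α y0 ψ
      = ∫ _, muA Y U f g α y0 ψ ∂(γ : Measure (E m × U0)) := by simp
    _ ≤ ∫ p, (g p + (α * (ψ (f p) - ψ p.1) + (1 - α) * (ψ y0 - ψ p.1))) ∂(γ : Measure (E m × U0)) :=
        integral_mono_ae (integrable_const _) (hg_int.add hint)
          (hG.mono fun p hp => (csInf_le hbdd ⟨p, hp, rfl⟩).trans_eq (add_assoc _ _ _))
    _ = ∫ p, g p ∂(γ : Measure (E m × U0)) := by rw [integral_add hg_int hint, hzero, add_zero]

end Duality

section Optimality

variable {m : ℕ} {U0 : Type*} [TopologicalSpace U0] [MeasurableSpace U0]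
  [OpensMeasurableSpace U0] [MeasurableSingletonClass U0] {Y : Set (E m)} {U : E m → Set U0}
  {f : E m × U0 → E m} {g : E m × U0 → ℝ} {α M : ℝ} {y0 : E m}

lemma muA_le_gStarA (hYc : IsCompact Y) (hf : Continuous f) (hg : Continuous g)
    (hM : ∀ p : E m × U0, p.1 ∈ Y → |g p| ≤ M) (hA2 : ∀ y ∈ Y, (Amap Y U f y).Nonempty)
    (hy0 : y0 ∈ Y) (hα₀ : 0 ≤ α) (hα₁ : α < 1) {ψ : E m → ℝ} (hψ : BddLscOn Y ψ) :
    muA Y U f g α y0 ψ ≤ gStarA Y U f g α y0 := by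
  obtain ⟨y, u, hadm⟩ := exists_admProc hA2 hy0
  obtain ⟨γ, hγ, -⟩ := exists_mem_Wa_integral_eq hYc hα₀ hα₁ hM hadm
  refine le_csInf ⟨_, γ, hγ, rfl⟩ ?_
  rintro _ ⟨γ, hγ, rfl⟩
  exact muA_le_integral hf hg hM hy0 hα₀ hα₁.le hγ hψ

lemma gStarA_eq (hYc : IsCompact Y) (hf : Continuous f) (hg : Continuous g)
    (hM : ∀ p : E m × U0, p.1 ∈ Y → |g p| ≤ M) (hA2 : ∀ y ∈ Y, (Amap Y U f y).Nonempty)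
    (hy0 : y0 ∈ Y) (hα₀ : 0 ≤ α) (hα₁ : α < 1) (hV : BddLscOn Y (Valpha Y U f g α)) :
    gStarA Y U f g α y0 = (1 - α) * Valpha Y U f g α y0 := by
  obtain ⟨y, u, hadm⟩ := exists_admProc hA2 hy0
  obtain ⟨γ, hγ, -⟩ := exists_mem_Wa_integral_eq hYc hα₀ hα₁ hM hadm
  refine csInf_eq_of_forall_ge_of_forall_gt_exists_lt ⟨_, γ, hγ, rfl⟩ ?_ fun w hw => ?_
  · rintro _ ⟨γ, hγ, rfl⟩
    rw [← muA_Valpha hα₀ hα₁ hM hA2 hy0]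
    exact muA_le_integral hf hg hM hy0 hα₀ hα₁.le hγ hV
  · have h1α : 0 < 1 - α := sub_pos.2 hα₁
    have hVw : Valpha Y U f g α y0 < w / (1 - α) := by rw [lt_div_iff₀ h1α]; linarith
    obtain ⟨y, u, hadm, hlt⟩ := exists_discountedCost_lt (g := g) (α := α) hA2 hy0 (sub_pos.2 hVw)
    obtain ⟨γ, hγ, hγg⟩ := exists_mem_Wa_integral_eq hYc hα₀ hα₁ hM hadm
    refine ⟨_, ⟨γ, hγ, rfl⟩, ?_⟩
    rw [hγg, ← lt_div_iff₀' h1α]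
    linarith

lemma muStarA_eq (hYc : IsCompact Y) (hf : Continuous f) (hg : Continuous g)
    (hM : ∀ p : E m × U0, p.1 ∈ Y → |g p| ≤ M) (hA2 : ∀ y ∈ Y, (Amap Y U f y).Nonempty)
    (hy0 : y0 ∈ Y) (hα₀ : 0 ≤ α) (hα₁ : α < 1) (hV : BddLscOn Y (Valpha Y U f g α)) :
    muStarA Y U f g α y0 = (1 - α) * Valpha Y U f g α y0 := by
  refine IsGreatest.csSup_eq ⟨⟨_, hV, (muA_Valpha hα₀ hα₁ hM hA2 hy0).symm⟩, ?_⟩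
  rintro _ ⟨ψ, hψ, rfl⟩
  rw [← gStarA_eq hYc hf hg hM hA2 hy0 hα₀ hα₁ hV]
  exact muA_le_gStarA hYc hf hg hM hA2 hy0 hα₀ hα₁ hψ

end Optimality

theorem stmt9_general {m : ℕ} {U0 : Type*} [MetricSpace U0] [CompactSpace U0]
    [MeasurableSpace U0] [BorelSpace U0]
    (Y : Set (E m)) (hYc : IsCompact Y)
    (U : E m → Set U0) (hUusc : UscOn Y U) (hUcomp : ∀ y ∈ Y, IsCompact (U y))
    (f : E m × U0 → E m) (hf : Continuous f)
    (g : E m × U0 → ℝ) (hg : Continuous g)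
    (hA2 : ∀ y ∈ Y, (Amap Y U f y).Nonempty)
    (α : ℝ) (hα : α ∈ Set.Ioo (0:ℝ) 1) (y0 : E m) (hy0 : y0 ∈ Y) :
    muStarA Y U f g α y0 = gStarA Y U f g α y0 ∧
    gStarA Y U f g α y0 = (1 - α) * Valpha Y U f g α y0 ∧
    BddLscOn Y (Valpha Y U f g α) ∧
    muA Y U f g α y0 (Valpha Y U f g α) = muStarA Y U f g α y0 := by
  have hα₀ : 0 ≤ α := hα.1.le
  have hα₁ : α < 1 := hα.2
  obtain ⟨M, hM⟩ := (hYc.prod isCompact_univ).exists_bound_of_continuousOn hg.continuousOn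
  replace hM : ∀ p : E m × U0, p.1 ∈ Y → |g p| ≤ M := fun p hp => hM p ⟨hp, mem_univ _⟩
  have hV : BddLscOn Y (Valpha Y U f g α) :=
    ⟨lowerSemicontinuousOn_Valpha hYc hUusc hUcomp hf hg hα₀ hα₁ hM hA2,
      _, fun y hy => abs_Valpha_le hα₀ hα₁ hM hA2 hy⟩
  have hgStar := gStarA_eq hYc hf hg hM hA2 hy0 hα₀ hα₁ hV
  have hmuStar := muStarA_eq hYc hf hg hM hA2 hy0 hα₀ hα₁ hV
  exact ⟨hmuStar.trans hgStar.symm, hgStar, hV,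
    (muA_Valpha hα₀ hα₁ hM hA2 hy0).trans hmuStar.symm⟩

theorem stmt9 {m : ℕ} {U0 : Type*} [MetricSpace U0] [CompactSpace U0]
    [MeasurableSpace U0] [BorelSpace U0]
    (Y : Set (E m)) (hYne : Y.Nonempty) (hYc : IsCompact Y)
    (U : E m → Set U0) (hUusc : UscOn Y U) (hUcomp : ∀ y ∈ Y, IsCompact (U y))
    (f : E m × U0 → E m) (hf : Continuous f)
    (g : E m × U0 → ℝ) (hg : Continuous g)
    (hA2 : ∀ y ∈ Y, (Amap Y U f y).Nonempty)
    (α : ℝ) (hα : α ∈ Set.Ioo (0:ℝ) 1) (y0 : E m) (hy0 : y0 ∈ Y) :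
    muStarA Y U f g α y0 = gStarA Y U f g α y0 ∧
    gStarA Y U f g α y0 = (1 - α) * Valpha Y U f g α y0 ∧
    BddLscOn Y (Valpha Y U f g α) ∧
    muA Y U f g α y0 (Valpha Y U f g α) = muStarA Y U f g α y0 :=
  stmt9_general Y hYc U hUusc hUcomp f hf g hg hA2 α hα y0 hy0

end LPOC
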